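/- arXiv:1804.04558 — 6 statements merged into one kernel-verified Lean document; each statement's English description precedes it below -/
import Mathlib

section
/- If N is a finite normal subgroup of a direct product A × B and B is an icc group, then N is contained in A × {1}. -/
theorem MonoidHom.conjugatesOf_subset_image_of_surjective {G H : Type*} [Group G] [Group H]
    {f : G →* H} (hf : Function.Surjective f) (g : G) :
    conjugatesOf (f g) ⊆ f '' conjugatesOf g := by
  intro x hx
  obtain ⟨c, rfl⟩ := isConj_iff.1 hx
  obtain ⟨c, rfl⟩ := hf c
  exact ⟨c * g * c⁻¹, isConj_iff.2 ⟨c, rfl⟩, by simp⟩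

theorem Subgroup.Normal.finite_conjugatesOf {G : Type*} [Group G] {N : Subgroup G} (hN : N.Normal)
    (hfin : (N : Set G).Finite) {g : G} (hg : g ∈ N) : (conjugatesOf g).Finite :=
  hfin.subset (Group.conjugates_subset_normal hg)

/-- A finite normal subgroup of A × B with B icc is contained in A × {1}. -/
theorem stmt5 (A B : Type*) [Group A] [Group B]
    (hB : ∀ b : B, b ≠ 1 → {x : B | ∃ h : B, h * b * h⁻¹ = x}.Infinite)
    (N : Subgroup (A × B)) (hN : N.Normal) (hfin : (N : Set (A × B)).Finite) :
    N ≤ (⊤ : Subgroup A).prod ⊥ := by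
  rintro ⟨a, b⟩ hab
  refine Subgroup.mem_prod.2 ⟨trivial, ?_⟩
  by_contra hb
  have hfin_b : (conjugatesOf b).Finite :=
    ((hN.finite_conjugatesOf hfin hab).image (MonoidHom.snd A B)).subset
      ((MonoidHom.snd A B).conjugatesOf_subset_image_of_surjective Prod.snd_surjective (a, b))
  exact hB b hb (by simpa only [conjugatesOf, isConj_iff] using hfin_b)
end

section
/- Let (Γ_n)_{n ∈ ℕ} be a family of icc groups and Γ = ⊕_{n ∈ ℕ} Γ_n their restricted direct sum. If B is a normal subgroup of Γ such that for every k the subgroup B_k := B ∩ (⊕_{n ≠ k} Γ_n) has finite index in B, then B is trivial. -/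
/-! If `b ∈ B` had `b k ≠ 1`, conjugating `b` by the elements of the `k`-th factor would place
the whole (infinite) conjugacy class of `b k` inside the projection of `B` to `Γ k`. But that
projection has cardinality `[B : B ∩ ker πₖ]`, which is finite. -/

theorem MonoidHom.finite_map_of_relIndex_ker_ne_zero {G H : Type*} [Group G] [Group H]
    (f : G →* H) {B : Subgroup G} (hB : f.ker.relIndex B ≠ 0) : (B.map f : Set H).Finite := by
  rw [Subgroup.relIndex_ker] at hB
  exact Set.finite_coe_iff.mp (Nat.card_ne_zero.mp hB).2

theorem Pi.conj_apply_mem_map_evalMonoidHom {ι : Type*} [DecidableEq ι] {Γ : ι → Type*}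
    [∀ i, Group (Γ i)] {B : Subgroup (∀ i, Γ i)}
    (hnorm : ∀ g : ∀ i, Γ i, {i | g i ≠ 1}.Finite → ∀ b ∈ B, g * b * g⁻¹ ∈ B)
    {b : ∀ i, Γ i} (hb : b ∈ B) (k : ι) (h : Γ k) :
    h * b k * h⁻¹ ∈ B.map (Pi.evalMonoidHom Γ k) := by
  have hsupp : {i | Pi.mulSingle k h i ≠ 1}.Finite :=
    (Set.finite_singleton k).subset fun i hi => by
      by_contra hnk
      exact hi (Pi.mulSingle_eq_of_ne hnk h)
  exact ⟨_, hnorm _ hsupp b hb, by simp⟩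

theorem stmt6_general (Γ : ℕ → Type*) [∀ n, Group (Γ n)]
    (hicc : ∀ n, ∀ g : Γ n, g ≠ 1 → {x : Γ n | ∃ h : Γ n, h * g * h⁻¹ = x}.Infinite)
    (B : Subgroup (∀ n, Γ n))
    (hnorm : ∀ g : ∀ n, Γ n, {n | g n ≠ 1}.Finite → ∀ b ∈ B, g * b * g⁻¹ ∈ B)
    (hfin : ∀ k : ℕ, (MonoidHom.ker (Pi.evalMonoidHom Γ k)).relIndex B ≠ 0) :
    B = ⊥ := by
  rw [Subgroup.eq_bot_iff_forall]
  intro b hb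
  funext k
  by_contra hk
  have hconj : {x : Γ k | ∃ h : Γ k, h * b k * h⁻¹ = x} ⊆ B.map (Pi.evalMonoidHom Γ k) := by
    rintro x ⟨h, rfl⟩
    exact Pi.conj_apply_mem_map_evalMonoidHom hnorm hb k h
  exact (hicc k (b k) hk).mono hconj <|
    (Pi.evalMonoidHom Γ k).finite_map_of_relIndex_ker_ne_zero (hfin k)

/-- If B is a normal subgroup of a restricted direct sum of icc groups such that
B ∩ (⊕_{n ≠ k} Γ_n) has finite index in B for every k, then B is trivial. -/
theorem stmt6 (Γ : ℕ → Type*) [∀ n, Group (Γ n)]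
    (hicc : ∀ n, ∀ g : Γ n, g ≠ 1 → {x : Γ n | ∃ h : Γ n, h * g * h⁻¹ = x}.Infinite)
    (B : Subgroup (∀ n, Γ n))
    (hsupp : ∀ f ∈ B, {n | f n ≠ 1}.Finite)
    (hnorm : ∀ g : ∀ n, Γ n, {n | g n ≠ 1}.Finite → ∀ b ∈ B, g * b * g⁻¹ ∈ B)
    (hfin : ∀ k : ℕ, (MonoidHom.ker (Pi.evalMonoidHom Γ k)).relIndex B ≠ 0) :
    B = ⊥ :=
  stmt6_general Γ hicc B hnorm hfin
end

section
/- Let Ω ≤ Γ be groups and γ ∈ Γ. There exists a finite subset F ⊆ Γ with Ωγ ⊆ FΩ if and only if the index [Ω : Ω ∩ γΩγ⁻¹] is finite. -/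
/-!
Ωγ ⊆ FΩ for a finite F exactly when Ωγ meets only finitely many left cosets of Ω, i.e. when the
orbit of the coset γΩ under left multiplication by Ω is finite. By orbit–stabilizer this orbit is
in bijection with Ω ⧸ Stab_Ω(γΩ), and Stab_Ω(γΩ) = Ω ∩ γΩγ⁻¹.
-/

open Pointwise

namespace Subgroup

variable {G : Type*} [Group G] (H : Subgroup G)

theorem exists_finset_subset_mul_iff_finite_image_mk (S : Set G) :
    (∃ F : Finset G, S ⊆ (F : Set G) * H) ↔ (((↑) : G → G ⧸ H) '' S).Finite := by
  classical
  constructor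
  · rintro ⟨F, hF⟩
    refine (F.finite_toSet.image ((↑) : G → G ⧸ H)).subset ?_
    rintro _ ⟨s, hs, rfl⟩
    obtain ⟨f, hf, h, hh, rfl⟩ := hF hs
    exact ⟨f, hf, (QuotientGroup.mk_mul_of_mem f hh).symm⟩
  · intro hfin
    refine ⟨hfin.toFinset.image Quotient.out, fun s hs => ?_⟩
    refine ⟨Quotient.out (s : G ⧸ H), ?_, (Quotient.out (s : G ⧸ H))⁻¹ * s, ?_,
      mul_inv_cancel_left _ _⟩
    · exact Finset.mem_image_of_mem _ (hfin.mem_toFinset.mpr ⟨s, hs, rfl⟩)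
    · exact QuotientGroup.eq.mp (QuotientGroup.out_eq' _)

theorem image_mk_mul_singleton_eq_orbit (g : G) :
    ((↑) : G → G ⧸ H) '' ((H : Set G) * {g}) = MulAction.orbit H (g : G ⧸ H) := by
  rw [Set.mul_singleton, Set.image_image]
  ext x
  simp only [Set.mem_image, SetLike.mem_coe, MulAction.mem_orbit_iff, Subtype.exists]
  exact exists_congr fun h => ⟨fun ⟨hh, e⟩ => ⟨hh, e⟩, fun ⟨hh, e⟩ => ⟨hh, e⟩⟩

theorem stabilizer_mk_eq_subgroupOf (g : G) :
    MulAction.stabilizer H (g : G ⧸ H) = (MulAut.conj g • H).subgroupOf H := by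
  ext h
  change ((h : G) • (g : G ⧸ H)) = g ↔ _
  rw [mem_subgroupOf, mem_pointwise_smul_iff_inv_smul_mem, MulAction.Quotient.smul_mk,
    QuotientGroup.eq, ← H.inv_mem_iff]
  simp [mul_assoc]

end Subgroup

open Pointwise in
/-- Ωγ ⊆ FΩ for some finite F iff [Ω : Ω ∩ γΩγ⁻¹] < ∞. -/
theorem stmt7 (Γ : Type*) [Group Γ] (Ω : Subgroup Γ) (γ : Γ) :
    (∃ F : Finset Γ, (Ω : Set Γ) * {γ} ⊆ (F : Set Γ) * (Ω : Set Γ)) ↔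
      (MulAut.conj γ • Ω).relIndex Ω ≠ 0 := by
  rw [Ω.exists_finset_subset_mul_iff_finite_image_mk, Ω.image_mk_mul_singleton_eq_orbit,
    Subgroup.relIndex, ← Ω.stabilizer_mk_eq_subgroupOf, Subgroup.index_ne_zero_iff_finite,
    ← (MulAction.orbitEquivQuotientStabilizer Ω (γ : Γ ⧸ Ω)).finite_iff, Set.finite_coe_iff]
end

section
/- Let G be a group, Λ ≤ G a subgroup, and Ω = vC_G(Λ) the virtual centralizer of Λ in G. Then the virtual center vZ(Ω) is contained in the virtual center vZ(ΛΩ) of the subgroup ΛΩ. In particular, if ΛΩ is icc then Ω is either trivial or icc. -/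
/-!
If every element of `B` has a finite `A`-conjugacy orbit, then conjugating `g` by `a * b`
lands in `⋃_{y ∈ B-orbit of g} (A-orbit of y)`, and the `A`-orbit of `b g b⁻¹` is controlled by
the `A`-orbits of `b` and of `g`, since `a (b g b⁻¹) a⁻¹ = (a b a⁻¹) (a g a⁻¹) (a b a⁻¹)⁻¹`.
Taking `A = Λ` and `B = Ω = vC_G(Λ)`, an element of `Ω` with finite `Ω`-orbit has finite `ΛΩ`-orbit.
-/

open Pointwise

section

variable {G : Type*} [Group G]

def conjOrbit (S : Set G) (g : G) : Set G := (fun s => s * g * s⁻¹) '' S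

theorem conjOrbit_conj_subset_image2 (S : Set G) (s g : G) :
    conjOrbit S (s * g * s⁻¹) ⊆
      Set.image2 (fun p q => p * q * p⁻¹) (conjOrbit S s) (conjOrbit S g) := by
  rintro x ⟨l, hl, rfl⟩
  exact ⟨l * s * l⁻¹, ⟨l, hl, rfl⟩, l * g * l⁻¹, ⟨l, hl, rfl⟩, by group⟩

theorem Set.Finite.conjOrbit_conj {S : Set G} {s g : G} (hs : (conjOrbit S s).Finite)
    (hg : (conjOrbit S g).Finite) : (conjOrbit S (s * g * s⁻¹)).Finite :=
  (hs.image2 _ hg).subset (conjOrbit_conj_subset_image2 S s g)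

theorem conjOrbit_mul_subset (A B : Set G) (g : G) :
    conjOrbit (A * B) g ⊆ ⋃ y ∈ conjOrbit B g, conjOrbit A y := by
  rintro x ⟨_, ⟨a, ha, b, hb, rfl⟩, rfl⟩
  exact Set.mem_biUnion ⟨b, hb, rfl⟩ ⟨a, ha, by group⟩

theorem Set.Finite.conjOrbit_mul {A B : Set G} {g : G}
    (hB : ∀ b ∈ B, (conjOrbit A b).Finite) (hgA : (conjOrbit A g).Finite)
    (hgB : (conjOrbit B g).Finite) : (conjOrbit (A * B) g).Finite := by
  refine (hgB.biUnion ?_).subset (conjOrbit_mul_subset A B g)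
  rintro _ ⟨b, hb, rfl⟩
  exact (hB b hb).conjOrbit_conj hgA

end

open Pointwise in
/-- For Ω = vC_G(Λ) and H = ΛΩ, vZ(Ω) ⊆ vZ(H); in particular if H is icc then every
nontrivial element of Ω has infinite Ω-conjugacy orbit. -/
theorem stmt11 (G : Type*) [Group G] (Λ : Subgroup G)
    (Ω : Set G) (hΩ : Ω = {g : G | {x : G | ∃ l ∈ Λ, l * g * l⁻¹ = x}.Finite})
    (H : Subgroup G) (hH : (H : Set G) = (Λ : Set G) * Ω) :
    ({g ∈ Ω | {x : G | ∃ s ∈ Ω, s * g * s⁻¹ = x}.Finite} ⊆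
        {g : G | g ∈ H ∧ {x : G | ∃ h ∈ H, h * g * h⁻¹ = x}.Finite}) ∧
      ((∀ g ∈ H, g ≠ 1 → {x : G | ∃ h ∈ H, h * g * h⁻¹ = x}.Infinite) →
        ∀ g ∈ Ω, g ≠ 1 → {x : G | ∃ s ∈ Ω, s * g * s⁻¹ = x}.Infinite) := by
  have hΩΛ : ∀ g ∈ Ω, (conjOrbit (Λ : Set G) g).Finite := fun g hg => by
    rw [hΩ] at hg
    exact hg
  have vZ_subset : ∀ g ∈ Ω, (conjOrbit Ω g).Finite → g ∈ H ∧ (conjOrbit (H : Set G) g).Finite :=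
    fun g hg hgΩ => by
      rw [← SetLike.mem_coe, hH]
      exact ⟨Set.subset_mul_right Ω Λ.one_mem hg, (hΩΛ g hg).conjOrbit_mul hΩΛ hgΩ⟩
  refine ⟨fun g ⟨hg, hgΩ⟩ => vZ_subset g hg hgΩ, fun hicc g hg hne hgΩ => ?_⟩
  obtain ⟨hgH, hgH_fin⟩ := vZ_subset g hg hgΩ
  exact hicc g hgH hne hgH_fin
end

section
/- Let Γ be an icc group. For every finite subset S ⊆ Γ containing the identity, there exists μ ∈ Γ such that μSμ⁻¹ ∩ S = {e}. -/
open MulAction Subgroup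
open scoped Pointwise

/-- If the centralizer of `a` has finite index, the conjugacy class of `a` is finite. -/
lemma conjClass_finite_of_centralizer_finiteIndex {Γ : Type*} [Group Γ] (a : Γ)
    (hfi : (Subgroup.centralizer {a}).FiniteIndex) :
    {x : Γ | ∃ h : Γ, h * a * h⁻¹ = x}.Finite := by
  haveI := hfi
  haveI : Finite (Γ ⧸ Subgroup.centralizer {a}) := inferInstance
  set H := Subgroup.centralizer ({a} : Set Γ)
  have hwd : ∀ b c : Γ, (QuotientGroup.leftRel H) b c →
      b * a * b⁻¹ = c * a * c⁻¹ := by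
    intro b c hbc
    have hbc' : b⁻¹ * c ∈ H := QuotientGroup.leftRel_apply.mp hbc
    have hc : a * (b⁻¹ * c) = (b⁻¹ * c) * a :=
      (Subgroup.mem_centralizer_iff.mp hbc' a rfl)
    have h2 : b * (a * (b⁻¹ * c)) * c⁻¹ = b * ((b⁻¹ * c) * a) * c⁻¹ := by rw [hc]
    simpa [mul_assoc] using h2
  let f : Γ ⧸ H → Γ := fun q => Quotient.liftOn' q (fun h => h * a * h⁻¹) hwd
  have hsub : {x : Γ | ∃ h : Γ, h * a * h⁻¹ = x} ⊆ Set.range f := by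
    rintro x ⟨h, rfl⟩
    exact ⟨QuotientGroup.mk h, rfl⟩
  exact (Set.finite_range f).subset hsub

/-- In an icc group, for every finite subset S containing 1 there is μ with
μSμ⁻¹ ∩ S = {1}. -/
theorem stmt17 (Γ : Type*) [Group Γ]
    (hicc : ∀ g : Γ, g ≠ 1 → {x : Γ | ∃ h : Γ, h * g * h⁻¹ = x}.Infinite)
    (S : Finset Γ) (hS : (1 : Γ) ∈ S) :
    ∃ μ : Γ, {x : Γ | ∃ s ∈ S, μ * s * μ⁻¹ = x} ∩ (S : Set Γ) = {1} := by
  classical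
  -- It suffices to find μ with: ∀ s ∈ S, s ≠ 1 → μ s μ⁻¹ ∉ S.
  by_contra hcon
  push_neg at hcon
  have key : ∀ μ : Γ, ∃ s ∈ S, s ≠ 1 ∧ μ * s * μ⁻¹ ∈ S := by
    intro μ
    by_contra h
    push_neg at h
    apply hcon μ
    ext x
    simp only [Set.mem_inter_iff, Set.mem_setOf_eq, Set.mem_singleton_iff,
      Finset.mem_coe]
    constructor
    · rintro ⟨⟨s, hsS, rfl⟩, hxS⟩
      by_contra hx1
      have hs1 : s ≠ 1 := by
        rintro rfl
        exact hx1 (by group)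
      exact h s hsS hs1 hxS
    · rintro rfl
      exact ⟨⟨1, hS, by group⟩, hS⟩
  -- Bad sets are cosets of centralizers; they cover Γ.
  set T : Finset (Γ × Γ) :=
    (S ×ˢ S).filter (fun p => p.1 ≠ 1 ∧ ∃ μ : Γ, μ * p.1 * μ⁻¹ = p.2) with hT
  let g : Γ × Γ → Γ := fun p =>
    if h : ∃ μ : Γ, μ * p.1 * μ⁻¹ = p.2 then h.choose else 1
  let H : Γ × Γ → Subgroup Γ := fun p => Subgroup.centralizer {p.1}
  have hcovers : ⋃ p ∈ T, g p • (H p : Set Γ) = Set.univ := by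
    ext μ
    simp only [Set.mem_iUnion, Set.mem_univ, iff_true]
    obtain ⟨s, hsS, hs1, hts⟩ := key μ
    have hex : ∃ ν : Γ, ν * s * ν⁻¹ = μ * s * μ⁻¹ := ⟨μ, rfl⟩
    refine ⟨(s, μ * s * μ⁻¹), ?_, ?_⟩
    · simp only [hT, Finset.mem_filter, Finset.mem_product]
      exact ⟨⟨hsS, hts⟩, hs1, hex⟩
    · rw [Set.mem_smul_set_iff_inv_smul_mem]
      have hg : g (s, μ * s * μ⁻¹) * s * (g (s, μ * s * μ⁻¹))⁻¹ = μ * s * μ⁻¹ := by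
        simp only [g, dif_pos hex]
        exact hex.choose_spec
      set ν := g (s, μ * s * μ⁻¹) with hν
      show ν⁻¹ * μ ∈ (Subgroup.centralizer {s} : Set Γ)
      rw [SetLike.mem_coe, Subgroup.mem_centralizer_iff]
      rintro y rfl
      -- need: s * (ν⁻¹ * μ) = (ν⁻¹ * μ) * s
      have h2 : ν⁻¹ * (ν * y * ν⁻¹) * μ = ν⁻¹ * (μ * y * μ⁻¹) * μ := by rw [hg]
      simpa [mul_assoc] using h2
  obtain ⟨p, hpT, hfi⟩ := Subgroup.exists_finiteIndex_of_leftCoset_cover hcovers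
  simp only [hT, Finset.mem_filter, Finset.mem_product] at hpT
  exact hicc p.1 hpT.2.1 (conjClass_finite_of_centralizer_finiteIndex p.1 hfi)
end

section
/- Let L = Σ_j × R where R is icc, and view Σ_j = Σ_j × {1}. If K ⊴ Σ_j × R and [K : K ∩ Σ_j] < ∞, then K ≤ Σ_j × {1}. -/
/-- If K is a normal subgroup of S × R with R icc and K ∩ (S × {1}) has finite index
in K, then K ≤ S × {1}. -/
theorem stmt19 (S R : Type*) [Group S] [Group R]
    (hR : ∀ r : R, r ≠ 1 → {x : R | ∃ h : R, h * r * h⁻¹ = x}.Infinite)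
    (K : Subgroup (S × R)) (hK : K.Normal)
    (hfi : ((⊤ : Subgroup S).prod (⊥ : Subgroup R)).relIndex K ≠ 0) :
    K ≤ (⊤ : Subgroup S).prod ⊥ := by
  set H := (⊤ : Subgroup S).prod (⊥ : Subgroup R) with hH
  intro k hkK
  by_contra hkH
  have hr : k.2 ≠ 1 := by
    intro h1
    exact hkH (Subgroup.mem_prod.mpr ⟨trivial, h1⟩)
  have hinf := hR k.2 hr
  haveI : Infinite {x : R | ∃ h : R, h * k.2 * h⁻¹ = x} := Set.infinite_coe_iff.mpr hinf
  haveI hfin : Finite (K ⧸ H.subgroupOf K) := by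
    have : Nat.card (K ⧸ H.subgroupOf K) ≠ 0 := hfi
    exact (Nat.card_ne_zero.mp this).2
  have key : ∀ x ∈ {x : R | ∃ h : R, h * k.2 * h⁻¹ = x}, (k.1, x) ∈ K := by
    rintro x ⟨h, rfl⟩
    have := hK.conj_mem k hkK (1, h)
    have he : ((1 : S), h) * k * ((1 : S), h)⁻¹ = (k.1, h * k.2 * h⁻¹) := by
      simp [Prod.ext_iff]
    rwa [he] at this
  let φ : {x : R | ∃ h : R, h * k.2 * h⁻¹ = x} → K ⧸ H.subgroupOf K :=
    fun x => QuotientGroup.mk ⟨(k.1, x.1), key x.1 x.2⟩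
  have hinj : Function.Injective φ := by
    intro x y hxy
    have hm := QuotientGroup.eq.mp hxy
    rw [Subgroup.mem_subgroupOf] at hm
    have h2 : (x : R)⁻¹ * (y : R) ∈ (⊥ : Subgroup R) := (Subgroup.mem_prod.mp hm).2
    ext
    exact inv_mul_eq_one.mp h2
  haveI := Finite.of_injective φ hinj
  exact not_finite {x : R | ∃ h : R, h * k.2 * h⁻¹ = x}
end
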